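/- Let (Ω, ℱ, ℙ) be a probability space, t₀ < T, and let A and A_N (N ≥ 1) be jointly measurable functions [t₀,T] × Ω → ℝ, square-integrable on Ω × [t₀,T], such that ∫_{t₀}^{T} E[(A_N(s,·) − A(s,·))²] ds → 0 as N → ∞. Define K_N(t,ω) = ∫_{t₀}^{t} A_N(s,ω) ds. Assume there exists C > 0 with E[e^{2K_N(t,·)}] ≤ C for all N ≥ 1 and all t ∈ [t₀,T]. Let f : ℝ → [0,∞) be Lipschitz continuous and let 0 < p̂ ≤ p̌ < 1. Define f₁^N(p,t) = E[f(h(p,K_N(t,·)))·g(p,K_N(t,·))]. Then for every p ∈ [p̂,p̌] and every t ∈ [t₀,T], the sequence (f₁^N(p,t))_{N≥1} converges in ℝ as N → ∞. -/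

import Mathlib

/-!
For fixed `p ∈ (0,1)` the integrand `Φ z = f (h(p,z)) * g(p,z)` is bounded and Lipschitz in `z`:
`h(p,·)` takes values in `[0,1]` and `g(p,·)` in `[0, 1/(4p(1-p))]`, and both have bounded
derivatives, because the denominator `d = 1 - p + p e^{-z}` satisfies `d² ≥ 4p(1-p)e^{-z}`.
Hence `f₁ᴺ(p,t)` differs from `E[Φ(K(t))]`, `K(t) = ∫_{t₀}^t A`, by at most a constant times
`E|K_N(t) - K(t)| ≤ ‖A_N - A‖_{L¹} ≤ √(T - t₀) ‖A_N - A‖_{L²}`, which tends to `0`.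
-/

open MeasureTheory Filter Real

theorem nonneg_of_abs_sub_le_mul {u : ℝ → ℝ} {K : ℝ} (hu : ∀ x y, |u x - u y| ≤ K * |x - y|) :
    0 ≤ K := by
  simpa using (abs_nonneg _).trans (hu 1 0)

theorem abs_sub_le_of_hasDerivAt {u u' : ℝ → ℝ} {C : ℝ} (hu : ∀ x, HasDerivAt u (u' x) x)
    (hC : ∀ x, |u' x| ≤ C) (x y : ℝ) : |u x - u y| ≤ C * |x - y| := by
  simpa only [Real.norm_eq_abs] using
    convex_univ.norm_image_sub_le_of_norm_hasDerivWithin_le (fun z _ => (hu z).hasDerivWithinAt)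
      (fun z _ => hC z) (Set.mem_univ y) (Set.mem_univ x)

theorem abs_mul_sub_mul_le {α : Type*} [PseudoMetricSpace α] {u v : α → ℝ} {Bu Bv Lu Lv : ℝ}
    (hBu : ∀ x, |u x| ≤ Bu) (hBv : ∀ x, |v x| ≤ Bv)
    (hLu : ∀ x y, |u x - u y| ≤ Lu * dist x y) (hLv : ∀ x y, |v x - v y| ≤ Lv * dist x y)
    (x y : α) : |u x * v x - u y * v y| ≤ (Bu * Lv + Lu * Bv) * dist x y := by
  calc |u x * v x - u y * v y| = |u x * (v x - v y) + (u x - u y) * v y| := by congr 1; ring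
    _ ≤ |u x| * |v x - v y| + |u x - u y| * |v y| := by
        simpa only [abs_mul] using abs_add_le (u x * (v x - v y)) ((u x - u y) * v y)
    _ ≤ Bu * (Lv * dist x y) + Lu * dist x y * Bv :=
        add_le_add (mul_le_mul (hBu x) (hLv x y) (abs_nonneg _) ((abs_nonneg _).trans (hBu x)))
          (mul_le_mul (hLu x y) (hBv y) (abs_nonneg _) ((abs_nonneg _).trans (hLu x y)))
    _ = (Bu * Lv + Lu * Bv) * dist x y := by ring

noncomputable def logisticDenom (p z : ℝ) : ℝ := 1 + p * (-1 + exp (-z))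

noncomputable def logisticH (p z : ℝ) : ℝ := p * exp (-z) / logisticDenom p z

noncomputable def logisticG (p z : ℝ) : ℝ := exp (-z) / logisticDenom p z ^ 2

noncomputable def logisticIntegrand (f : ℝ → ℝ) (p z : ℝ) : ℝ :=
  f (logisticH p z) * logisticG p z

section Logistic

variable {p : ℝ}

theorem logisticDenom_eq (p z : ℝ) : logisticDenom p z = (1 - p) + p * exp (-z) := by
  rw [logisticDenom]; ring

theorem logisticDenom_pos (hp0 : 0 ≤ p) (hp1 : p < 1) (z : ℝ) : 0 < logisticDenom p z := by
  rw [logisticDenom_eq]; positivity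

theorem four_mul_le_logisticDenom_sq (p z : ℝ) :
    4 * (p * (1 - p)) * exp (-z) ≤ logisticDenom p z ^ 2 := by
  rw [logisticDenom_eq]; nlinarith [sq_nonneg ((1 - p) - p * exp (-z))]

theorem hasDerivAt_logisticDenom (p z : ℝ) :
    HasDerivAt (logisticDenom p) (-(p * exp (-z))) z := by
  refine (((((hasDerivAt_neg z).exp).const_add (-1)).const_mul p).const_add 1).congr_deriv ?_
  ring

theorem logisticH_mem_Icc (hp0 : 0 ≤ p) (hp1 : p < 1) (z : ℝ) :
    logisticH p z ∈ Set.Icc 0 1 := by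
  have hd := logisticDenom_pos hp0 hp1 z
  refine ⟨by unfold logisticH; positivity, ?_⟩
  rw [logisticH, div_le_one hd, logisticDenom_eq]; linarith

theorem hasDerivAt_logisticH (hp0 : 0 ≤ p) (hp1 : p < 1) (z : ℝ) :
    HasDerivAt (logisticH p) (-(p * (1 - p) * exp (-z)) / logisticDenom p z ^ 2) z := by
  refine ((((hasDerivAt_neg z).exp).const_mul p).div (hasDerivAt_logisticDenom p z)
    (logisticDenom_pos hp0 hp1 z).ne').congr_deriv ?_
  rw [logisticDenom_eq]; ring

theorem abs_logisticH_sub_le (hp0 : 0 ≤ p) (hp1 : p < 1) (z w : ℝ) :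
    |logisticH p z - logisticH p w| ≤ 1 / 4 * |z - w| := by
  refine abs_sub_le_of_hasDerivAt (hasDerivAt_logisticH hp0 hp1) (fun x => ?_) z w
  have hd := pow_pos (logisticDenom_pos hp0 hp1 x) 2
  have hn : 0 ≤ p * (1 - p) * exp (-x) :=
    mul_nonneg (mul_nonneg hp0 (sub_nonneg.2 hp1.le)) (exp_pos _).le
  rw [abs_div, abs_neg, abs_of_nonneg hn, abs_of_pos hd, div_le_iff₀ hd]
  linarith [four_mul_le_logisticDenom_sq p x]

theorem logisticG_mem_Icc (hp0 : 0 < p) (hp1 : p < 1) (z : ℝ) :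
    logisticG p z ∈ Set.Icc 0 (1 / (4 * (p * (1 - p)))) := by
  have hd := pow_pos (logisticDenom_pos hp0.le hp1 z) 2
  have hpq : 0 < 4 * (p * (1 - p)) := by nlinarith
  refine ⟨by unfold logisticG; positivity, ?_⟩
  rw [logisticG, div_le_div_iff₀ hd hpq]
  linarith [four_mul_le_logisticDenom_sq p z]

theorem hasDerivAt_logisticG (hp0 : 0 ≤ p) (hp1 : p < 1) (z : ℝ) :
    HasDerivAt (logisticG p)
      (exp (-z) * (2 * p * exp (-z) - logisticDenom p z) / logisticDenom p z ^ 3) z := by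
  have hd := (logisticDenom_pos hp0 hp1 z).ne'
  refine (((hasDerivAt_neg z).exp).div ((hasDerivAt_logisticDenom p z).pow 2)
    (pow_ne_zero 2 hd)).congr_deriv ?_
  simp only [Pi.pow_apply]
  field_simp
  push_cast
  ring

theorem abs_logisticG_sub_le (hp0 : 0 < p) (hp1 : p < 1) (z w : ℝ) :
    |logisticG p z - logisticG p w| ≤ 1 / (4 * (p * (1 - p))) * |z - w| := by
  refine abs_sub_le_of_hasDerivAt (hasDerivAt_logisticG hp0.le hp1) (fun x => ?_) z w
  have hd := logisticDenom_pos hp0.le hp1 x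
  have he := exp_pos (-x)
  have hnum : |2 * p * exp (-x) - logisticDenom p x| ≤ logisticDenom p x := by
    rw [abs_le, logisticDenom_eq]; constructor <;> nlinarith
  calc |exp (-x) * (2 * p * exp (-x) - logisticDenom p x) / logisticDenom p x ^ 3|
      = exp (-x) * |2 * p * exp (-x) - logisticDenom p x| / logisticDenom p x ^ 3 := by
        rw [abs_div, abs_mul, abs_of_pos he, abs_of_pos (pow_pos hd 3)]
    _ ≤ exp (-x) * logisticDenom p x / logisticDenom p x ^ 3 := by gcongr
    _ = logisticG p x := by rw [logisticG]; field_simp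
    _ ≤ 1 / (4 * (p * (1 - p))) := (logisticG_mem_Icc hp0 hp1 x).2

variable {f : ℝ → ℝ} {L : ℝ}

theorem abs_comp_logisticH_le (hL : ∀ x y, |f x - f y| ≤ L * |x - y|)
    (hp0 : 0 ≤ p) (hp1 : p < 1) (z : ℝ) : |f (logisticH p z)| ≤ |f 0| + L := by
  obtain ⟨hh0, hh1⟩ := logisticH_mem_Icc hp0 hp1 z
  calc |f (logisticH p z)| ≤ |f 0| + |f (logisticH p z) - f 0| := by
        simpa using abs_add_le (f 0) (f (logisticH p z) - f 0)
    _ ≤ |f 0| + L * |logisticH p z - 0| := by gcongr; exact hL _ _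
    _ ≤ |f 0| + L := by
        rw [sub_zero, abs_of_nonneg hh0]; nlinarith [nonneg_of_abs_sub_le_mul hL]

theorem abs_logisticIntegrand_le (hL : ∀ x y, |f x - f y| ≤ L * |x - y|)
    (hp0 : 0 < p) (hp1 : p < 1) (z : ℝ) :
    |logisticIntegrand f p z| ≤ (|f 0| + L) * (1 / (4 * (p * (1 - p)))) := by
  obtain ⟨hg0, hg1⟩ := logisticG_mem_Icc hp0 hp1 z
  have hfh := abs_comp_logisticH_le hL hp0.le hp1 z
  rw [logisticIntegrand, abs_mul, abs_of_nonneg hg0]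
  exact mul_le_mul hfh hg1 hg0 ((abs_nonneg _).trans hfh)

theorem abs_logisticIntegrand_sub_le (hL : ∀ x y, |f x - f y| ≤ L * |x - y|)
    (hp0 : 0 < p) (hp1 : p < 1) (z w : ℝ) :
    |logisticIntegrand f p z - logisticIntegrand f p w| ≤
      (|f 0| + L + L / 4) / (4 * (p * (1 - p))) * |z - w| := by
  have hg := logisticG_mem_Icc hp0 hp1
  have := abs_mul_sub_mul_le (u := fun z => f (logisticH p z)) (v := logisticG p)
    (Lu := L * (1 / 4)) (abs_comp_logisticH_le hL hp0.le hp1)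
    (fun z => by rw [abs_of_nonneg (hg z).1]; exact (hg z).2)
    (fun z w => by
      rw [Real.dist_eq, mul_assoc]
      exact (hL _ _).trans (mul_le_mul_of_nonneg_left (abs_logisticH_sub_le hp0.le hp1 z w)
        (nonneg_of_abs_sub_le_mul hL)))
    (fun z w => by rw [Real.dist_eq]; exact abs_logisticG_sub_le hp0 hp1 z w) z w
  rw [Real.dist_eq] at this
  exact this.trans_eq (by ring)

end Logistic

theorem stronglyMeasurable_intervalIntegral {Ω : Type*} [MeasurableSpace Ω] {F : ℝ → Ω → ℝ}
    (hF : Measurable (Function.uncurry F)) (a t : ℝ) :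
    StronglyMeasurable fun ω => ∫ s in a..t, F s ω :=
  (hF.stronglyMeasurable.integral_prod_left (μ := volume.restrict (Set.Ioc a t))).sub
    (hF.stronglyMeasurable.integral_prod_left (μ := volume.restrict (Set.Ioc t a)))

theorem abs_intervalIntegral_sub_le {F G : ℝ → ℝ} {a b t : ℝ} (ht : t ∈ Set.Icc a b)
    (hF : IntegrableOn F (Set.Icc a b)) (hG : IntegrableOn G (Set.Icc a b)) :
    |(∫ s in a..t, F s) - ∫ s in a..t, G s| ≤ ∫ s in Set.Icc a b, |F s - G s| := by
  have hsub : Set.Ioc a t ⊆ Set.Icc a b := fun s hs => ⟨hs.1.le, hs.2.trans ht.2⟩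
  rw [← intervalIntegral.integral_sub
    ((intervalIntegrable_iff_integrableOn_Ioc_of_le ht.1).2 (hF.mono_set hsub))
    ((intervalIntegrable_iff_integrableOn_Ioc_of_le ht.1).2 (hG.mono_set hsub))]
  calc |∫ s in a..t, (F s - G s)| ≤ ∫ s in a..t, |F s - G s| :=
        intervalIntegral.abs_integral_le_integral_abs ht.1
    _ = ∫ s in Set.Ioc a t, |F s - G s| := intervalIntegral.integral_of_le ht.1
    _ ≤ ∫ s in Set.Icc a b, |F s - G s| :=
        setIntegral_mono_set (hF.sub hG).abs (Eventually.of_forall fun _ => abs_nonneg _)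
          hsub.eventuallyLE

theorem integral_abs_le_sqrt_mul_sqrt {α : Type*} [MeasurableSpace α] {μ : Measure α}
    [IsFiniteMeasure μ] {X : α → ℝ} (hX : MemLp X 2 μ) :
    ∫ a, |X a| ∂μ ≤ √(μ.real Set.univ) * √(∫ a, X a ^ 2 ∂μ) := by
  have h := integral_mul_le_Lp_mul_Lq_of_nonneg (μ := μ) Real.HolderConjugate.two_two
    (f := fun a => |X a|) (g := fun _ => (1 : ℝ))
    (Eventually.of_forall fun a => abs_nonneg (X a)) (Eventually.of_forall fun _ => zero_le_one)
    (by rw [show ENNReal.ofReal 2 = 2 by simp]; exact hX.abs)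
    (by simpa using memLp_const (1 : ℝ))
  simp only [rpow_two, one_pow, sq_abs, integral_const, smul_eq_mul, mul_one] at h
  rw [mul_comm, sqrt_eq_rpow, sqrt_eq_rpow]
  exact h

theorem intervalIntegral_integral_eq_integral_prod {Ω : Type*} [MeasurableSpace Ω]
    {ℙ : Measure Ω} [SFinite ℙ] {F : ℝ → Ω → ℝ} {a b : ℝ} (hab : a ≤ b)
    (hF : Integrable (Function.uncurry F) ((volume.restrict (Set.Icc a b)).prod ℙ)) :
    ∫ s in a..b, ∫ ω, F s ω ∂ℙ = ∫ q, F q.1 q.2 ∂((volume.restrict (Set.Icc a b)).prod ℙ) := by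
  rw [intervalIntegral.integral_of_le hab, ← integral_Icc_eq_integral_Ioc]
  exact (integral_prod _ hF).symm

section Expectation

variable {Ω : Type*} [MeasurableSpace Ω] {ℙ : Measure Ω} [IsFiniteMeasure ℙ]
  {Φ : ℝ → ℝ} {B M : ℝ}

theorem abs_integral_comp_sub_comp_le (hB : ∀ z, |Φ z| ≤ B)
    (hM : ∀ z w, |Φ z - Φ w| ≤ M * |z - w|) {X Y Z : Ω → ℝ}
    (hX : AEStronglyMeasurable X ℙ) (hY : AEStronglyMeasurable Y ℙ) (hZ : Integrable Z ℙ)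
    (hXY : ∀ᵐ ω ∂ℙ, |X ω - Y ω| ≤ Z ω) :
    |(∫ ω, Φ (X ω) ∂ℙ) - ∫ ω, Φ (Y ω) ∂ℙ| ≤ M * ∫ ω, Z ω ∂ℙ := by
  have hΦ : Continuous Φ :=
    (LipschitzWith.of_dist_le' fun z w => by simpa only [Real.dist_eq] using hM z w).continuous
  have hint (V : Ω → ℝ) (hV : AEStronglyMeasurable V ℙ) : Integrable (fun ω => Φ (V ω)) ℙ :=
    .of_bound (hΦ.comp_aestronglyMeasurable hV) B (.of_forall fun ω => hB _)
  rw [← integral_sub (hint X hX) (hint Y hY), ← integral_const_mul]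
  refine abs_integral_le_integral_abs.trans
    (integral_mono_ae ((hint X hX).sub (hint Y hY)).abs (hZ.const_mul M) ?_)
  filter_upwards [hXY] with ω hω
  exact (hM _ _).trans (mul_le_mul_of_nonneg_left hω (nonneg_of_abs_sub_le_mul hM))

theorem abs_integral_comp_intervalIntegral_sub_le (hB : ∀ z, |Φ z| ≤ B)
    (hM : ∀ z w, |Φ z - Φ w| ≤ M * |z - w|) {F G : ℝ → Ω → ℝ} {a b t : ℝ}
    (hFm : Measurable (Function.uncurry F)) (hGm : Measurable (Function.uncurry G))
    (hF : Integrable (Function.uncurry F) ((volume.restrict (Set.Icc a b)).prod ℙ))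
    (hG : Integrable (Function.uncurry G) ((volume.restrict (Set.Icc a b)).prod ℙ))
    (ht : t ∈ Set.Icc a b) :
    |(∫ ω, Φ (∫ s in a..t, F s ω) ∂ℙ) - ∫ ω, Φ (∫ s in a..t, G s ω) ∂ℙ| ≤
      M * ∫ q, |F q.1 q.2 - G q.1 q.2| ∂((volume.restrict (Set.Icc a b)).prod ℙ) := by
  have hFG : Integrable (fun q : ℝ × Ω => F q.1 q.2 - G q.1 q.2)
      ((volume.restrict (Set.Icc a b)).prod ℙ) := hF.sub hG
  rw [integral_prod_symm (fun q => |F q.1 q.2 - G q.1 q.2|) hFG.abs]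
  refine abs_integral_comp_sub_comp_le hB hM
    (stronglyMeasurable_intervalIntegral hFm a t).aestronglyMeasurable
    (stronglyMeasurable_intervalIntegral hGm a t).aestronglyMeasurable
    (by simpa only [Real.norm_eq_abs] using hFG.integral_norm_prod_right) ?_
  filter_upwards [hF.prod_left_ae, hG.prod_left_ae] with ω hFω hGω
  exact abs_intervalIntegral_sub_le ht hFω hGω

end Expectation

theorem pdf_truncations_converge_general
    {Ω : Type*} [MeasurableSpace Ω] (ℙ : Measure Ω) [IsProbabilityMeasure ℙ]
    (t₀ T : ℝ)
    (A : ℝ → Ω → ℝ) (AN : ℕ → ℝ → Ω → ℝ)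
    (hAmeas : Measurable (Function.uncurry A))
    (hANmeas : ∀ N, Measurable (Function.uncurry (AN N)))
    (hAint : Integrable (fun q : ℝ × Ω => (A q.1 q.2)^2)
      ((volume.restrict (Set.Icc t₀ T)).prod ℙ))
    (hANint : ∀ N, Integrable (fun q : ℝ × Ω => (AN N q.1 q.2)^2)
      ((volume.restrict (Set.Icc t₀ T)).prod ℙ))
    (hconv : Tendsto (fun N => ∫ s in t₀..T, (∫ ω, (AN N s ω - A s ω)^2 ∂ℙ))
      atTop (nhds 0))
    (f : ℝ → ℝ)
    (L : ℝ) (hL : ∀ x y, |f x - f y| ≤ L * |x - y|)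
    (phat pcheck : ℝ) (h1 : 0 < phat) (h3 : pcheck < 1) :
    ∀ p ∈ Set.Icc phat pcheck, ∀ t ∈ Set.Icc t₀ T,
      ∃ l : ℝ, Tendsto (fun N : ℕ =>
          ∫ ω, f (p * Real.exp (-(∫ s in t₀..t, AN N s ω)) /
                (1 + p * (-1 + Real.exp (-(∫ s in t₀..t, AN N s ω))))) *
              (Real.exp (-(∫ s in t₀..t, AN N s ω)) /
                (1 + p * (-1 + Real.exp (-(∫ s in t₀..t, AN N s ω))))^2) ∂ℙ)
        atTop (nhds l) := by
  intro p hp t ht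
  have hp0 : 0 < p := h1.trans_le hp.1
  have hp1 : p < 1 := hp.2.trans_lt h3
  set μ := (volume.restrict (Set.Icc t₀ T)).prod ℙ
  have hA : MemLp (Function.uncurry A) 2 μ :=
    (memLp_two_iff_integrable_sq hAmeas.aestronglyMeasurable).2 hAint
  have hAN N : MemLp (Function.uncurry (AN N)) 2 μ :=
    (memLp_two_iff_integrable_sq (hANmeas N).aestronglyMeasurable).2 (hANint N)
  have hdist N := intervalIntegral_integral_eq_integral_prod
    (F := fun s ω => (AN N s ω - A s ω) ^ 2) (ht.1.trans ht.2)
    ((memLp_two_iff_integrable_sq ((hAN N).sub hA).1).1 ((hAN N).sub hA))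
  have hM0 := nonneg_of_abs_sub_le_mul (abs_logisticIntegrand_sub_le hL hp0 hp1)
  set M := (|f 0| + L + L / 4) / (4 * (p * (1 - p)))
  refine ⟨∫ ω, logisticIntegrand f p (∫ s in t₀..t, A s ω) ∂ℙ, ?_⟩
  show Tendsto (fun N => ∫ ω, logisticIntegrand f p (∫ s in t₀..t, AN N s ω) ∂ℙ) atTop _
  rw [tendsto_iff_norm_sub_tendsto_zero]
  refine squeeze_zero (fun _ => norm_nonneg _) (fun N => ?_) (g := fun N =>
    M * (√(μ.real Set.univ) * √(∫ s in t₀..T, (∫ ω, (AN N s ω - A s ω)^2 ∂ℙ)))) ?_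
  · rw [Real.norm_eq_abs, hdist N]
    exact (abs_integral_comp_intervalIntegral_sub_le (abs_logisticIntegrand_le hL hp0 hp1)
      (abs_logisticIntegrand_sub_le hL hp0 hp1) (hANmeas N) hAmeas ((hAN N).integrable one_le_two)
      (hA.integrable one_le_two) ht).trans
      (mul_le_mul_of_nonneg_left (integral_abs_le_sqrt_mul_sqrt ((hAN N).sub hA)) hM0)
  · simpa using (hconv.sqrt.const_mul _).const_mul _

theorem pdf_truncations_converge
    {Ω : Type*} [MeasurableSpace Ω] (ℙ : Measure Ω) [IsProbabilityMeasure ℙ]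
    (t₀ T : ℝ) (hT : t₀ < T)
    (A : ℝ → Ω → ℝ) (AN : ℕ → ℝ → Ω → ℝ)
    (hAmeas : Measurable (Function.uncurry A))
    (hANmeas : ∀ N, Measurable (Function.uncurry (AN N)))
    (hAint : Integrable (fun q : ℝ × Ω => (A q.1 q.2)^2)
      ((volume.restrict (Set.Icc t₀ T)).prod ℙ))
    (hANint : ∀ N, Integrable (fun q : ℝ × Ω => (AN N q.1 q.2)^2)
      ((volume.restrict (Set.Icc t₀ T)).prod ℙ))
    (hconv : Tendsto (fun N => ∫ s in t₀..T, (∫ ω, (AN N s ω - A s ω)^2 ∂ℙ))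
      atTop (nhds 0))
    (C : ℝ) (hC : 0 < C)
    (hmom : ∀ N : ℕ, 1 ≤ N → ∀ t ∈ Set.Icc t₀ T,
      (∫ ω, Real.exp (2 * ∫ s in t₀..t, AN N s ω) ∂ℙ) ≤ C)
    (f : ℝ → ℝ) (hf0 : ∀ x, 0 ≤ f x)
    (L : ℝ) (hL : ∀ x y, |f x - f y| ≤ L * |x - y|)
    (phat pcheck : ℝ) (h1 : 0 < phat) (h2 : phat ≤ pcheck) (h3 : pcheck < 1) :
    ∀ p ∈ Set.Icc phat pcheck, ∀ t ∈ Set.Icc t₀ T,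
      ∃ l : ℝ, Tendsto (fun N : ℕ =>
          ∫ ω, f (p * Real.exp (-(∫ s in t₀..t, AN N s ω)) /
                (1 + p * (-1 + Real.exp (-(∫ s in t₀..t, AN N s ω))))) *
              (Real.exp (-(∫ s in t₀..t, AN N s ω)) /
                (1 + p * (-1 + Real.exp (-(∫ s in t₀..t, AN N s ω))))^2) ∂ℙ)
        atTop (nhds l) :=
  pdf_truncations_converge_general ℙ t₀ T A AN hAmeas hANmeas hAint hANint hconv f L hL phat pcheck
    h1 h3
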